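/- Let m, n ≥ 2 and let Γ be the one-vertex interface gluing of the complete graphs K_m and K_n at any chosen vertices v_m ∈ K_m and v_n ∈ K_n (a graph on m + n − 1 vertices). Then the characteristic polynomial of the Laplacian L of Γ is det(L − λ·1) = (−1)^{m+n−1} · λ · (λ−m)^{m−2} · (λ−n)^{n−2} · (λ−1) · (λ−(m+n−1)), as polynomials in λ over ℝ. -/

import Mathlib

open Polynomial

open scoped Classical

/-- `det (M - λ·1)`, the characteristic determinant of a square real matrix,
as a polynomial in `λ`. -/
noncomputable def charDet {n : Type*} [Fintype n] [DecidableEq n] (M : Matrix n n ℝ) :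
    ℝ[X] :=
  (M.map C - (X : ℝ[X]) • 1).det

/-- The one-vertex interface gluing of `G₁` and `G₂` at `(v₁, v₂)`:
the graph on `V₁ ⊕ {x : V₂ // x ≠ v₂}` identifying `v₁` with `v₂`. -/
def interfaceGlueOne {V₁ V₂ : Type*} (G₁ : SimpleGraph V₁) (G₂ : SimpleGraph V₂)
    (v₁ : V₁) (v₂ : V₂) : SimpleGraph (V₁ ⊕ {x : V₂ // x ≠ v₂}) where
  Adj x y :=
    match x, y with
    | Sum.inl u, Sum.inl v => G₁.Adj u v
    | Sum.inr u, Sum.inr v => G₂.Adj u v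
    | Sum.inl u, Sum.inr v => u = v₁ ∧ G₂.Adj v₂ v
    | Sum.inr u, Sum.inl v => v = v₁ ∧ G₂.Adj v₂ u
  symm := ⟨by
    rintro (u | u) (v | v) h
    · exact G₁.adj_symm h
    · exact h
    · exact h
    · exact G₂.adj_symm h⟩
  loopless := ⟨by
    rintro (u | u) h
    · exact G₁.ne_of_adj h rfl
    · exact G₂.ne_of_adj h rfl⟩

/-!
Let `L` be the Laplacian of the glued graph. Then `L - x = D + Uᵀ C U`, where `D` is diagonal with
entries `m - x` on the `K_m` side and `n - x` on the rest of the `K_n` side, the rows of `U` are the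
indicators of the two sides and of the glued vertex, and `C` is a `3 × 3` matrix of coefficients.
For `x ∉ {m, n}` the matrix determinant lemma reduces `det (L - x)` to `det D` times a `3 × 3`
determinant, which evaluates to the claimed product; two polynomials agreeing off a finite set
coincide.
-/

open Matrix SimpleGraph

theorem eval_charDet {ι : Type*} [Fintype ι] [DecidableEq ι] (M : Matrix ι ι ℝ) (x : ℝ) :
    (charDet M).eval x = (M - x • 1).det := by
  rw [charDet, ← coe_evalRingHom, RingHom.map_det]
  congr 1
  ext i j
  by_cases h : i = j <;> simp [h, one_apply]

theorem Matrix.det_diagonal_add_mul {K ι κ : Type*} [Field K] [Fintype ι] [DecidableEq ι]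
    [Fintype κ] [DecidableEq κ] {d : ι → K} (hd : ∀ i, d i ≠ 0) (U : Matrix ι κ K)
    (W : Matrix κ ι K) :
    (diagonal d + U * W).det = (∏ i, d i) * (1 + W * diagonal (fun i => (d i)⁻¹) * U).det := by
  have hinv : (diagonal d)⁻¹ = diagonal fun i => (d i)⁻¹ :=
    inv_eq_left_inv (by rw [diagonal_mul_diagonal]; simp [hd])
  rw [det_add_mul U W (by simp [isUnit_iff_ne_zero, Finset.prod_ne_zero_iff, hd]), det_diagonal,
    hinv]

section Glue

variable {V₁ V₂ : Type*} (G₁ : SimpleGraph V₁) (G₂ : SimpleGraph V₂) (v₁ : V₁) (v₂ : V₂)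

@[simp]
theorem interfaceGlueOne_adj_inl_inl (a a' : V₁) :
    (interfaceGlueOne G₁ G₂ v₁ v₂).Adj (.inl a) (.inl a') ↔ G₁.Adj a a' := Iff.rfl

@[simp]
theorem interfaceGlueOne_adj_inr_inr (b b' : {x // x ≠ v₂}) :
    (interfaceGlueOne G₁ G₂ v₁ v₂).Adj (.inr b) (.inr b') ↔ G₂.Adj b b' := Iff.rfl

@[simp]
theorem interfaceGlueOne_adj_inl_inr (a : V₁) (b : {x // x ≠ v₂}) :
    (interfaceGlueOne G₁ G₂ v₁ v₂).Adj (.inl a) (.inr b) ↔ a = v₁ ∧ G₂.Adj v₂ b := Iff.rfl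

@[simp]
theorem interfaceGlueOne_adj_inr_inl (b : {x // x ≠ v₂}) (a : V₁) :
    (interfaceGlueOne G₁ G₂ v₁ v₂).Adj (.inr b) (.inl a) ↔ a = v₁ ∧ G₂.Adj v₂ b := Iff.rfl

variable [Fintype V₁] [Fintype V₂] [DecidableEq V₂] [DecidableRel G₂.Adj]

theorem degree_interfaceGlueOne_inl [DecidableRel G₁.Adj] (a : V₁) :
    (interfaceGlueOne G₁ G₂ v₁ v₂).degree (.inl a) =
      G₁.degree a + if a = v₁ then G₂.degree v₂ else 0 := by
  simp only [← card_neighborFinset_eq_degree, neighborFinset_eq_filter, Finset.card_filter,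
    Fintype.sum_sum_type, interfaceGlueOne_adj_inl_inl, interfaceGlueOne_adj_inl_inr]
  split_ifs with ha
  · rw [Fintype.sum_eq_add_sum_subtype_ne _ v₂]
    simp [ha]
  · simp [ha]

theorem degree_interfaceGlueOne_inr (b : {x : V₂ // x ≠ v₂}) :
    (interfaceGlueOne G₁ G₂ v₁ v₂).degree (.inr b) = G₂.degree b := by
  simp only [← card_neighborFinset_eq_degree, neighborFinset_eq_filter, Finset.card_filter,
    Fintype.sum_sum_type, interfaceGlueOne_adj_inr_inl, interfaceGlueOne_adj_inr_inr,
    Fintype.sum_eq_add_sum_subtype_ne _ v₂]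
  by_cases hb : G₂.Adj b v₂ <;> simp [G₂.adj_comm v₂, hb]

end Glue

section CompleteGlue

variable {m n : ℕ} (vm : Fin m) (vn : Fin n)

local notation "β" => {x : Fin n // x ≠ vn}
local notation "Γ" => interfaceGlueOne (⊤ : SimpleGraph (Fin m)) (⊤ : SimpleGraph (Fin n)) vm vn

def glueIndicators : Matrix (Fin 3) (Fin m ⊕ β) ℝ :=
  of ![Sum.elim 1 0, Sum.elim 0 1, Sum.elim (Pi.single vm 1) 0]

def glueCoeffs (n : ℕ) : Matrix (Fin 3) (Fin 3) ℝ := !![-1, 0, 0; 0, -1, -1; 0, -1, (n : ℝ) - 1]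

theorem lapMatrix_interfaceGlueOne_top_sub_smul (x : ℝ) :
    (Γ).lapMatrix ℝ - x • 1 =
      diagonal (Sum.elim (fun _ => (m : ℝ) - x) fun _ => (n : ℝ) - x) +
        (glueIndicators vm vn)ᵀ * (glueCoeffs n * glueIndicators vm vn) := by
  have hm : 1 ≤ m := vm.pos
  have hn : 1 ≤ n := vn.pos
  ext (a | ⟨b, hb⟩) (a' | ⟨b', hb'⟩) <;>
    simp [lapMatrix, degMatrix, diagonal_apply, one_apply, mul_apply, Fin.sum_univ_three,
      glueIndicators, glueCoeffs, degree_interfaceGlueOne_inl, degree_interfaceGlueOne_inr,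
      Pi.single_apply, adjMatrix_apply, Nat.cast_sub hm, Nat.cast_sub hn] <;>
    split_ifs <;> simp_all <;> ring

theorem glueIndicators_mul_diagonal_mul_transpose (a b : ℝ) :
    glueIndicators vm vn * diagonal (Sum.elim (fun _ : Fin m => a) fun _ : β => b) *
        (glueIndicators vm vn)ᵀ =
      (!![(m : ℝ) * a, 0, a; 0, ((n : ℝ) - 1) * b, 0; a, 0, a] : Matrix (Fin 3) (Fin 3) ℝ) := by
  have hn : 1 ≤ n := vn.pos
  ext i j
  fin_cases i <;> fin_cases j <;>
    simp [glueIndicators, mul_apply, vecMul_diagonal, Fintype.sum_sum_type, Pi.single_apply,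
      Nat.cast_sub hn]

theorem det_lapMatrix_interfaceGlueOne_top_sub_smul (hm : 2 ≤ m) (hn : 2 ≤ n) {x : ℝ}
    (hxm : x ≠ m) (hxn : x ≠ n) :
    ((Γ).lapMatrix ℝ - x • 1).det =
      -((m - x) ^ (m - 2) * (n - x) ^ (n - 2) * (x * (x - 1) * (x - (m + n - 1)))) := by
  have hm' : (m : ℝ) - x ≠ 0 := sub_ne_zero.2 hxm.symm
  have hn' : (n : ℝ) - x ≠ 0 := sub_ne_zero.2 hxn.symm
  have hinv : (fun i => (Sum.elim (fun _ : Fin m => (m : ℝ) - x) (fun _ : β => (n : ℝ) - x) i)⁻¹)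
      = Sum.elim (fun _ => ((m : ℝ) - x)⁻¹) fun _ => ((n : ℝ) - x)⁻¹ := by
    funext i; cases i <;> rfl
  rw [lapMatrix_interfaceGlueOne_top_sub_smul,
    det_diagonal_add_mul (by rintro (_ | _) <;> assumption), Fintype.prod_sum_type, hinv,
    Matrix.mul_assoc, Matrix.mul_assoc, ← Matrix.mul_assoc (glueIndicators vm vn),
    glueIndicators_mul_diagonal_mul_transpose, det_fin_three]
  obtain ⟨p, rfl⟩ : ∃ p, m = p + 2 := ⟨m - 2, by omega⟩
  obtain ⟨q, rfl⟩ : ∃ q, n = q + 2 := ⟨n - 2, by omega⟩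
  simp [glueCoeffs, Fintype.card_subtype_compl] at hm' hn' ⊢
  field_simp
  ring

end CompleteGlue

theorem charDet_interfaceGlueOne_complete (m n : ℕ) (hm : 2 ≤ m) (hn : 2 ≤ n)
    (vm : Fin m) (vn : Fin n) :
    charDet ((interfaceGlueOne (⊤ : SimpleGraph (Fin m)) (⊤ : SimpleGraph (Fin n))
        vm vn).lapMatrix ℝ) =
      (-1 : ℝ[X]) ^ (m + n - 1) * X * (X - C (m : ℝ)) ^ (m - 2) *
        (X - C (n : ℝ)) ^ (n - 2) * (X - 1) * (X - C ((m : ℝ) + n - 1)) := by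
  refine eq_of_infinite_eval_eq _ _ ((Set.toFinite {(m : ℝ), (n : ℝ)}).infinite_compl.mono ?_)
  intro x hx
  simp only [Set.mem_compl_iff, Set.mem_insert_iff, Set.mem_singleton_iff, not_or] at hx
  have hsign : (-1 : ℝ) ^ (m + n - 1) * (-1) ^ (m - 2) * (-1) ^ (n - 2) = -1 := by
    rw [← pow_add, ← pow_add]
    exact Odd.neg_one_pow ⟨m + n - 3, by omega⟩
  simp only [Set.mem_ofPred_eq, eval_charDet,
    det_lapMatrix_interfaceGlueOne_top_sub_smul vm vn hm hn hx.1 hx.2, eval_mul, eval_pow,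
    eval_sub, eval_X, eval_C, eval_one, eval_neg]
  rw [← neg_sub (m : ℝ) x, ← neg_sub (n : ℝ) x, neg_pow ((m : ℝ) - x), neg_pow ((n : ℝ) - x)]
  linear_combination
    -(x * (m - x) ^ (m - 2) * (n - x) ^ (n - 2) * (x - 1) * (x - (m + n - 1))) * hsign
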